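/- arXiv:1903.06891 — 3 statements merged into one kernel-verified Lean document; each statement's English description precedes it below -/
import Mathlib

section
/- Let K be a field, r ≥ 2, and let e₁,…,e_r be the standard basis of K^r. Suppose K^r = V₁ ⊕ V₂ is a direct sum decomposition such that each of the r+1 lines K·e₁,…,K·e_r, K·(e₁+⋯+e_r) is contained in V₁ or in V₂. Then V₁ = 0 or V₂ = 0. -/
/-- If `K^r = V₁ ⊕ V₂` and each of the `r+1` lines `K·e₁,…,K·e_r, K·(e₁+⋯+e_r)` is
contained in `V₁` or in `V₂`, then `V₁ = 0` or `V₂ = 0`. -/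
theorem stmt_5 (K : Type) [Field K] (r : ℕ) (hr : 2 ≤ r)
    (V₁ V₂ : Submodule K (Fin r → K))
    (hdisj : V₁ ⊓ V₂ = ⊥) (hsup : V₁ ⊔ V₂ = ⊤)
    (hbasis : ∀ h : Fin r,
      Submodule.span K {Pi.single h (1 : K)} ≤ V₁ ∨
      Submodule.span K {Pi.single h (1 : K)} ≤ V₂)
    (hsum : Submodule.span K {(fun _ => 1 : Fin r → K)} ≤ V₁ ∨
            Submodule.span K {(fun _ => 1 : Fin r → K)} ≤ V₂) :
    V₁ = ⊥ ∨ V₂ = ⊥ := by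
  have key : ∀ V W : Submodule K (Fin r → K), V ⊓ W = ⊥ →
      (∀ h : Fin r, Pi.single h (1 : K) ∈ V ∨ Pi.single h (1 : K) ∈ W) →
      (fun _ => (1 : K)) ∈ V → W = ⊥ := by
    intro V W hVW hb h1
    classical
    set S : Finset (Fin r) := Finset.univ.filter (fun h => Pi.single h (1 : K) ∈ V) with hS
    have hs : (∑ h ∈ S, Pi.single h (1 : K)) ∈ V := by
      refine Submodule.sum_mem _ ?_
      intro h hh
      exact (Finset.mem_filter.mp hh).2
    have ht : (∑ h ∈ Sᶜ, Pi.single h (1 : K)) ∈ W := by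
      refine Submodule.sum_mem _ ?_
      intro h hh
      rcases hb h with hv | hw
      · exact absurd (Finset.mem_filter.mpr ⟨Finset.mem_univ h, hv⟩)
          (Finset.mem_compl.mp hh)
      · exact hw
    have hsum' : (∑ h ∈ S, Pi.single h (1 : K)) + (∑ h ∈ Sᶜ, Pi.single h (1 : K))
        = (fun _ => (1 : K)) := by
      rw [Finset.sum_add_sum_compl S (fun h => Pi.single h (1 : K))]
      exact Finset.univ_sum_single (fun _ => (1 : K))
    have htV : (∑ h ∈ Sᶜ, Pi.single h (1 : K)) ∈ V := by
      have : (∑ h ∈ Sᶜ, Pi.single h (1 : K))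
          = (fun _ => (1 : K)) - (∑ h ∈ S, Pi.single h (1 : K)) := by
        rw [← hsum']; abel
      rw [this]
      exact Submodule.sub_mem _ h1 hs
    have ht0 : (∑ h ∈ Sᶜ, Pi.single h (1 : K)) = 0 := by
      have : (∑ h ∈ Sᶜ, Pi.single h (1 : K)) ∈ V ⊓ W := ⟨htV, ht⟩
      rwa [hVW, Submodule.mem_bot] at this
    have hScompl : Sᶜ = ∅ := by
      by_contra hne
      obtain ⟨h, hh⟩ := Finset.nonempty_iff_ne_empty.mpr hne
      have heval : (∑ h' ∈ Sᶜ, Pi.single h' (1 : K)) h = 1 := by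
        simp [Finset.sum_apply, Pi.single_apply, hh]
      rw [ht0] at heval
      simp at heval
    have hVtop : V = ⊤ := by
      rw [Submodule.eq_top_iff']
      intro x
      have hx : x = ∑ h, Pi.single h (x h) := (Finset.univ_sum_single x).symm
      rw [hx]
      refine Submodule.sum_mem _ ?_
      intro h _
      have hhS : h ∈ S := by
        have : h ∉ Sᶜ := by rw [hScompl]; exact Finset.notMem_empty h
        simpa using this
      have hmem : Pi.single h (1 : K) ∈ V := (Finset.mem_filter.mp hhS).2
      have : Pi.single h (x h) = x h • (Pi.single h (1 : K) : Fin r → K) := by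
        rw [← Pi.single_smul, smul_eq_mul, mul_one]
      rw [this]
      exact Submodule.smul_mem _ _ hmem
    rw [← hVW, hVtop, top_inf_eq]
  have hb' : ∀ h : Fin r, Pi.single h (1 : K) ∈ V₁ ∨ Pi.single h (1 : K) ∈ V₂ := by
    intro h
    rcases hbasis h with hv | hv
    · exact Or.inl (hv (Submodule.mem_span_singleton_self _))
    · exact Or.inr (hv (Submodule.mem_span_singleton_self _))
  rcases hsum with h1 | h1
  · exact Or.inr (key V₁ V₂ hdisj hb' (h1 (Submodule.mem_span_singleton_self _)))
  · refine Or.inl (key V₂ V₁ ?_ (fun h => (hb' h).symm)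
      (h1 (Submodule.mem_span_singleton_self _)))
    rw [inf_comm]; exact hdisj
end

section
/- Let K be a field, m ≥ 3, and J = {j₁ < ⋯ < j_r < j_{r+1}} ⊆ {1,…,m} with #J = r+1 ≥ 3. The m-tuple flag D(J) = (K^r; V⁽¹⁾,…,V⁽ᵐ⁾) where V⁽ʲʰ⁾ = K·e_h for 1 ≤ h ≤ r, V⁽ʲʳ⁺¹⁾ = K·(e₁+⋯+e_r), and V⁽ⁱ⁾ = 0 for i ∉ J, is indecomposable. -/
/-- The `m`-tuple flag `D(J)` for `J = {j₁ < ⋯ < j_{r+1}}`, `#J = r+1 ≥ 3`, given by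
`V⁽ʲʰ⁾ = K·e_h` for `1 ≤ h ≤ r`, `V⁽ʲ⁽ʳ⁺¹⁾⁾ = K·(e₁+⋯+e_r)` and `V⁽ⁱ⁾ = 0` for
`i ∉ J`, is indecomposable. -/
theorem stmt_6 (K : Type) [Field K] (m r : ℕ) (hm : 3 ≤ m) (hr : 2 ≤ r)
    (j : Fin (r + 1) → Fin m) (hj : StrictMono j)
    (V : Fin m → Submodule K (Fin r → K))
    (hV₁ : ∀ h : Fin r, V (j h.castSucc) = Submodule.span K {Pi.single h (1 : K)})
    (hV₂ : V (j (Fin.last r)) = Submodule.span K {(fun _ => 1 : Fin r → K)})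
    (hV₀ : ∀ i : Fin m, i ∉ Set.range j → V i = ⊥) :
    ∀ (V₁ V₂ : Type) [AddCommGroup V₁] [Module K V₁] [AddCommGroup V₂] [Module K V₂]
      (G₁ : Fin m → Submodule K V₁) (G₂ : Fin m → Submodule K V₂),
      (∃ v : V₁, v ≠ 0) → (∃ w : V₂, w ≠ 0) →
      ¬ ∃ e : (Fin r → K) ≃ₗ[K] (V₁ × V₂),
          ∀ i, (V i).map e.toLinearMap = (G₁ i).prod (G₂ i) := by
  rintro V₁ V₂ _ _ _ _ G₁ G₂ ⟨v, hv⟩ ⟨w, hw⟩ ⟨e, he⟩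
  classical
  have h0 : 0 < r := by omega
  set p : (V₁ × V₂) →ₗ[K] (V₁ × V₂) :=
    (LinearMap.inl K V₁ V₂).comp (LinearMap.fst K V₁ V₂) with hp
  set f : (Fin r → K) →ₗ[K] (Fin r → K) :=
    e.symm.toLinearMap ∘ₗ p ∘ₗ e.toLinearMap with hf
  have hfe : ∀ x : Fin r → K, f x = e.symm (p (e x)) := fun x => rfl
  have hpre : ∀ i : Fin m, ∀ x ∈ V i, f x ∈ V i := by
    intro i x hx
    have h1 : e x ∈ (G₁ i).prod (G₂ i) := by
      rw [← he i]; exact Submodule.mem_map_of_mem hx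
    have h2 : p (e x) ∈ (G₁ i).prod (G₂ i) := ⟨h1.1, (G₂ i).zero_mem⟩
    rw [← he i] at h2
    obtain ⟨y, hy, hey⟩ := h2
    have hxy : f x = y := by
      rw [hfe, ← hey]; simp
    rwa [hxy]
  have hsingle : ∀ h : Fin r, ∃ c : K, f (Pi.single h 1) = c • (Pi.single h 1 : Fin r → K) := by
    intro h
    have hmem := hpre (j h.castSucc) (Pi.single h 1)
      (by rw [hV₁ h]; exact Submodule.mem_span_singleton_self _)
    rw [hV₁ h, Submodule.mem_span_singleton] at hmem
    obtain ⟨c, hc⟩ := hmem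
    exact ⟨c, hc.symm⟩
  have honesmem := hpre (j (Fin.last r)) (fun _ => 1)
    (by rw [hV₂]; exact Submodule.mem_span_singleton_self _)
  rw [hV₂, Submodule.mem_span_singleton] at honesmem
  obtain ⟨μ, hμ⟩ := honesmem
  replace hμ : f (fun _ => 1) = μ • (fun _ => 1 : Fin r → K) := hμ.symm
  choose c hc using hsingle
  have hsum : (fun _ => (1:K)) = ∑ i : Fin r, Pi.single i (1:K) := by
    funext x
    simp [Finset.sum_apply, Pi.single_apply]
  have hceq : ∀ h : Fin r, c h = μ := by
    intro h
    have h2 := congrFun hμ h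
    rw [hsum, map_sum] at h2
    simp only [Finset.sum_apply, hc, Pi.smul_apply, Pi.single_apply, smul_eq_mul,
      mul_ite, mul_one, mul_zero, Finset.sum_ite_eq, Finset.mem_univ, if_true] at h2
    simpa using h2
  have hfx : ∀ x : Fin r → K, f x = μ • x := by
    have hbe : f = μ • LinearMap.id := by
      apply Module.Basis.ext (Pi.basisFun K (Fin r))
      intro i
      simp only [Pi.basisFun_apply]
      rw [hc i, hceq i]
      rfl
    intro x; rw [hbe]; rfl
  have hidem : ∀ x, f (f x) = f x := by
    intro x
    simp [hfe, hp]
  have hμμ : μ * μ = μ := by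
    have h1 := hidem (fun _ => 1)
    simp only [hfx] at h1
    have h2 := congrFun h1 ⟨0, h0⟩
    simpa using h2
  have hcases : μ = 0 ∨ μ = 1 := by
    rcases mul_eq_zero.mp (show μ * (μ - 1) = 0 by ring_nf; linear_combination hμμ) with h | h
    · exact Or.inl h
    · exact Or.inr (sub_eq_zero.mp h)
  rcases hcases with hμ0 | hμ1
  · -- f = 0, so first components vanish, contradiction with v ≠ 0
    have h1 : ∀ x : Fin r → K, (e x).1 = 0 := by
      intro x
      have h2 : f x = 0 := by rw [hfx, hμ0, zero_smul]
      rw [hfe] at h2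
      have h3 : p (e x) = 0 := by
        have := congrArg e h2
        simpa using this
      have := congrArg Prod.fst h3
      simpa [hp] using this
    have := h1 (e.symm (v, 0))
    simp at this
    exact hv this
  · -- f = id, so second components vanish, contradiction with w ≠ 0
    have h1 : ∀ x : Fin r → K, (e x).2 = 0 := by
      intro x
      have h2 : f x = x := by rw [hfx, hμ1, one_smul]
      rw [hfe] at h2
      have h3 : p (e x) = e x := by
        have := congrArg e h2
        simpa using this
      have := congrArg Prod.snd h3
      simpa [hp] using this.symm
    have := h1 (e.symm (0, w))
    simp at this
    exact hw this
end

section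
/- Let K be a field, r ≥ 2, and (K^r; V⁽¹⁾,…,V⁽ᵐ⁾) an m-tuple flag of lines such that among the subspaces, r+1 of them, indexed by k₁ < ⋯ < k_{r+1}, are lines in general position in K^r (any r of them span K^r). Then this m-tuple flag is indecomposable. -/
open Module

private lemma sup_lines_le {K : Type} [Field K] {n r : ℕ}
    (L : Fin n → Submodule K (Fin r → K)) (hL : ∀ h, Module.finrank K (L h) ≤ 1)
    (T : Finset (Fin n)) : Module.finrank K ↥(T.sup L) ≤ T.card := by
  classical
  induction T using Finset.induction_on with
  | empty => simp
  | @insert a T ha ih =>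
    rw [Finset.sup_insert, Finset.card_insert_of_notMem ha]
    have h1 := Submodule.finrank_sup_add_finrank_inf_eq (L a) (T.sup L)
    have h2 := hL a
    omega

private lemma aux_count {K : Type} [Field K] {r : ℕ} (W : Submodule K (Fin r → K))
    (hW : Module.finrank K W < r)
    (L : Fin (r + 1) → Submodule K (Fin r → K))
    (hL : ∀ h, Module.finrank K (L h) ≤ 1)
    (hgen : ∀ T : Finset (Fin (r + 1)), T.card = r → (⨆ h ∈ T, L h) = ⊤)
    (S : Finset (Fin (r + 1))) (hS : ∀ h, h ∉ S → L h ≤ W) :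
    r + 1 ≤ Module.finrank K W + S.card := by
  classical
  have main : ∀ x : Fin (r + 1), r ≤ Module.finrank K W + (S.erase x).card := by
    intro x
    have hT : (Finset.univ.erase x).card = r := by
      rw [Finset.card_erase_of_mem (Finset.mem_univ x), Finset.card_univ, Fintype.card_fin]
      omega
    have key : W ⊔ (S.erase x).sup L = ⊤ := by
      refine le_antisymm le_top ?_
      rw [← hgen _ hT]
      refine iSup_le fun h => iSup_le fun hhT => ?_
      by_cases hh : h ∈ S
      · exact le_sup_of_le_right
          (Finset.le_sup (Finset.mem_erase.mpr ⟨(Finset.mem_erase.mp hhT).1, hh⟩))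
      · exact le_sup_of_le_left (hS h hh)
    have h1 := Submodule.finrank_sup_add_finrank_inf_eq W ((S.erase x).sup L)
    rw [key] at h1
    have h2 := sup_lines_le L hL (S.erase x)
    have h3 : Module.finrank K (⊤ : Submodule K (Fin r → K)) = r := by
      rw [finrank_top, Module.finrank_fin_fun]
    omega
  rcases S.eq_empty_or_nonempty with h | ⟨x, hx⟩
  · have := main 0
    simp [h] at this
    omega
  · have h1 := main x
    have h2 := Finset.card_erase_of_mem hx
    have h3 : 1 ≤ S.card := Finset.card_pos.mpr ⟨x, hx⟩
    omega

/-- An `m`-tuple flag of lines in `K^r` such that `r+1` of its subspaces, indexed by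
`k₁ < ⋯ < k_{r+1}`, are lines in general position (any `r` of them span `K^r`),
is indecomposable. -/
theorem stmt_7 (K : Type) [Field K] (m r : ℕ) (hr : 2 ≤ r)
    (V : Fin m → Submodule K (Fin r → K))
    (hlines : ∀ i : Fin m, Module.finrank K (V i) ≤ 1)
    (k : Fin (r + 1) → Fin m) (hk : StrictMono k)
    (hklines : ∀ h : Fin (r + 1), Module.finrank K (V (k h)) = 1)
    (hgen : ∀ S : Finset (Fin (r + 1)), S.card = r → (⨆ h ∈ S, V (k h)) = ⊤) :
    ∀ (V₁ V₂ : Type) [AddCommGroup V₁] [Module K V₁] [AddCommGroup V₂] [Module K V₂]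
      (G₁ : Fin m → Submodule K V₁) (G₂ : Fin m → Submodule K V₂),
      (∃ v : V₁, v ≠ 0) → (∃ w : V₂, w ≠ 0) →
      ¬ ∃ e : (Fin r → K) ≃ₗ[K] (V₁ × V₂),
          ∀ i, (V i).map e.toLinearMap = (G₁ i).prod (G₂ i) := by
  intro V₁ V₂ _ _ _ _ G₁ G₂ hv hw hcon
  obtain ⟨v₀, hv₀⟩ := hv
  obtain ⟨w₀, hw₀⟩ := hw
  obtain ⟨e, he⟩ := hcon
  classical
  haveI : Module.Finite K (V₁ × V₂) := Module.Finite.equiv e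
  haveI : Module.Finite K V₁ :=
    Module.Finite.of_surjective (LinearMap.fst K V₁ V₂) (fun x => ⟨(x, 0), rfl⟩)
  haveI : Module.Finite K V₂ :=
    Module.Finite.of_surjective (LinearMap.snd K V₁ V₂) (fun x => ⟨(0, x), rfl⟩)
  haveI : Nontrivial V₁ := nontrivial_of_ne v₀ 0 hv₀
  haveI : Nontrivial V₂ := nontrivial_of_ne w₀ 0 hw₀
  have hd : finrank K V₁ + finrank K V₂ = r := by
    have h1 := e.finrank_eq
    rw [Module.finrank_fin_fun, Module.finrank_prod] at h1
    omega
  have hd₁ : 0 < finrank K V₁ := Module.finrank_pos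
  have hd₂ : 0 < finrank K V₂ := Module.finrank_pos
  set W₁ := Submodule.comap e.toLinearMap (Submodule.fst K V₁ V₂) with hW₁def
  set W₂ := Submodule.comap e.toLinearMap (Submodule.snd K V₁ V₂) with hW₂def
  have hW₁ : finrank K W₁ = finrank K V₁ := by
    rw [hW₁def, Submodule.comap_equiv_eq_map_symm, LinearEquiv.finrank_map_eq]
    exact LinearEquiv.finrank_eq (Submodule.fstEquiv K V₁ V₂)
  have hW₂ : finrank K W₂ = finrank K V₂ := by
    rw [hW₂def, Submodule.comap_equiv_eq_map_symm, LinearEquiv.finrank_map_eq]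
    exact LinearEquiv.finrank_eq (Submodule.sndEquiv K V₁ V₂)
  have hsplit : ∀ h : Fin (r + 1), V (k h) ≤ W₁ ∨ V (k h) ≤ W₂ := by
    intro h
    have hfr : Module.finrank K ((G₁ (k h)).prod (G₂ (k h))) = 1 := by
      rw [← he (k h), LinearEquiv.finrank_map_eq]
      exact hklines h
    have hbot : G₁ (k h) = ⊥ ∨ G₂ (k h) = ⊥ := by
      by_contra hc
      push_neg at hc
      obtain ⟨hc1, hc2⟩ := hc
      rw [Submodule.ne_bot_iff] at hc1 hc2
      obtain ⟨a, ha, ha0⟩ := hc1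
      obtain ⟨b, hb, hb0⟩ := hc2
      have hxP : ((a, 0) : V₁ × V₂) ∈ (G₁ (k h)).prod (G₂ (k h)) :=
        Submodule.mem_prod.mpr ⟨ha, Submodule.zero_mem _⟩
      have hyP : ((0, b) : V₁ × V₂) ∈ (G₁ (k h)).prod (G₂ (k h)) :=
        Submodule.mem_prod.mpr ⟨Submodule.zero_mem _, hb⟩
      have hx0 : (⟨(a, 0), hxP⟩ : (G₁ (k h)).prod (G₂ (k h))) ≠ 0 := by
        intro hh
        rw [Subtype.ext_iff] at hh
        apply ha0
        simpa using congrArg Prod.fst hh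
      obtain ⟨c, hc'⟩ := exists_smul_eq_of_finrank_eq_one hfr hx0
        (⟨(0, b), hyP⟩ : (G₁ (k h)).prod (G₂ (k h)))
      apply hb0
      rw [Subtype.ext_iff] at hc'
      simp only [SetLike.val_smul, Prod.smul_mk, smul_zero] at hc'
      have h2 := congrArg Prod.snd hc'
      simpa using h2.symm
    rcases hbot with h1 | h2
    · right
      refine Submodule.map_le_iff_le_comap.mp ?_
      rw [he (k h), h1]
      intro x hx
      rw [Submodule.mem_prod] at hx
      refine Submodule.mem_comap.mpr ?_
      simpa using hx.1
    · left
      refine Submodule.map_le_iff_le_comap.mp ?_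
      rw [he (k h), h2]
      intro x hx
      rw [Submodule.mem_prod] at hx
      refine Submodule.mem_comap.mpr ?_
      simpa using hx.2
  set S₁ : Finset (Fin (r + 1)) := Finset.univ.filter (fun h => V (k h) ≤ W₁) with hS₁def
  have hWlt₁ : finrank K W₁ < r := by omega
  have hWlt₂ : finrank K W₂ < r := by omega
  have hA := aux_count W₂ hWlt₂ (fun h => V (k h)) (fun h => hlines (k h)) hgen S₁
    (fun h hh => by
      rcases hsplit h with h1 | h2
      · exact absurd (Finset.mem_filter.mpr ⟨Finset.mem_univ h, h1⟩) hh
      · exact h2)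
  have hB := aux_count W₁ hWlt₁ (fun h => V (k h)) (fun h => hlines (k h)) hgen S₁ᶜ
    (fun h hh => by
      have : h ∈ S₁ := by simpa using hh
      exact (Finset.mem_filter.mp this).2)
  have hcard : S₁.card + S₁ᶜ.card = r + 1 := by
    rw [Finset.card_add_card_compl, Fintype.card_fin]
  omega
end
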